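/- arXiv:2401.03206 — 5 statements merged into one kernel-verified Lean document; each statement's English description precedes it below -/
import Mathlib

section
/- Let σ > 0 and define the recursion e_{i+1} = (i²σ²(1 - a s_i))/(i²σ² + 1)·e_i + b_i/(i²σ² + 1), where a > 0, 0 ≤ a s_i < 1 for i ≥ h, (b_i) is a bounded real sequence, ∑ s_i = ∞. If b_i ≡ b is constant, then e_i → 0. -/
open Filter Finset Topology

/-!
Once `i²σ² ≥ 1` and `i ≥ h`, the contraction factor satisfies `0 ≤ i²σ²(1 - a sᵢ)/(i²σ² + 1) ≤ 1 - a sᵢ/2`,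
so `|e_{i+1}| ≤ (1 - γᵢ)|eᵢ| + dᵢ` with `γᵢ = a sᵢ/2`, `∑ γᵢ = ∞` and `dᵢ = |b|/(i²σ² + 1)` summable.
Unrolling from a late index `m` gives `|eₙ| ≤ ∏_{m ≤ i < n} (1 - γᵢ) |eₘ| + ∑_{i ≥ m} dᵢ`:
the product is at most `exp (-∑_{m ≤ i < n} γᵢ) → 0`, and the tail of `∑ dᵢ` is small for large `m`.
-/

theorem le_prod_mul_add_sum_of_le_mul_add {u c d : ℕ → ℝ} {m : ℕ}
    (hc0 : ∀ i ≥ m, 0 ≤ c i) (hc1 : ∀ i ≥ m, c i ≤ 1) (hd : ∀ i ≥ m, 0 ≤ d i)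
    (hstep : ∀ i ≥ m, u (i + 1) ≤ c i * u i + d i) {n : ℕ} (hmn : m ≤ n) :
    u n ≤ (∏ i ∈ Ico m n, c i) * u m + ∑ i ∈ Ico m n, d i := by
  induction n, hmn using Nat.le_induction with
  | base => simp
  | succ n hmn ih =>
    have hsum : 0 ≤ ∑ i ∈ Ico m n, d i := sum_nonneg fun i hi => hd i (mem_Ico.1 hi).1
    rw [prod_Ico_succ_top hmn, sum_Ico_succ_top hmn]
    calc u (n + 1) ≤ c n * u n + d n := hstep n hmn
      _ ≤ c n * ((∏ i ∈ Ico m n, c i) * u m + ∑ i ∈ Ico m n, d i) + d n := by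
        gcongr
        exact hc0 n hmn
      _ ≤ _ := by linarith [mul_le_of_le_one_left hsum (hc1 n hmn)]

theorem prod_one_sub_le_exp_neg_sum {ι : Type*} (s : Finset ι) {γ : ι → ℝ}
    (hγ1 : ∀ i ∈ s, γ i ≤ 1) :
    ∏ i ∈ s, (1 - γ i) ≤ Real.exp (-∑ i ∈ s, γ i) := by
  rw [← sum_neg_distrib, Real.exp_sum]
  exact prod_le_prod (fun i hi => sub_nonneg.2 (hγ1 i hi)) fun i _ => Real.one_sub_le_exp_neg _

theorem tendsto_prod_Ico_one_sub_of_tendsto_sum {γ : ℕ → ℝ} {m : ℕ}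
    (hγ1 : ∀ i ≥ m, γ i ≤ 1)
    (hγ : Tendsto (fun n => ∑ i ∈ range n, γ i) atTop atTop) :
    Tendsto (fun n => ∏ i ∈ Ico m n, (1 - γ i)) atTop (𝓝 0) := by
  have hsum : Tendsto (fun n => ∑ i ∈ Ico m n, γ i) atTop atTop := by
    refine (tendsto_atTop_add_const_right _ (-∑ i ∈ range m, γ i) hγ).congr' ?_
    filter_upwards [eventually_ge_atTop m] with n hn
    rw [sum_Ico_eq_sub _ hn, sub_eq_add_neg]
  refine squeeze_zero (fun n => prod_nonneg fun i hi => sub_nonneg.2 (hγ1 i (mem_Ico.1 hi).1))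
    (fun n => prod_one_sub_le_exp_neg_sum _ fun i hi => hγ1 i (mem_Ico.1 hi).1) ?_
  exact Real.tendsto_exp_neg_atTop_nhds_zero.comp hsum

theorem tendsto_zero_of_le_one_sub_mul_add {u γ d : ℕ → ℝ} (hu : ∀ n, 0 ≤ u n)
    (hd : ∀ n, 0 ≤ d n) (hds : Summable d)
    (hγ : Tendsto (fun n => ∑ i ∈ range n, γ i) atTop atTop)
    (hstep : ∀ᶠ n in atTop, 0 ≤ γ n ∧ γ n ≤ 1 ∧ u (n + 1) ≤ (1 - γ n) * u n + d n) :
    Tendsto u atTop (𝓝 0) := by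
  obtain ⟨m₀, hm₀⟩ := eventually_atTop.1 hstep
  refine tendsto_order.2 ⟨fun ε hε => .of_forall fun n => hε.trans_le (hu n), fun ε hε => ?_⟩
  have htail_lim : Tendsto (fun m => ∑' i, d i - ∑ i ∈ range m, d i) atTop (𝓝 0) := by
    simpa using hds.hasSum.tendsto_sum_nat.const_sub (∑' i, d i)
  obtain ⟨m, hm_tail, hm⟩ :=
    ((htail_lim.eventually (gt_mem_nhds (half_pos hε))).and (eventually_ge_atTop m₀)).exists
  have hstep_m : ∀ i ≥ m, 0 ≤ γ i ∧ γ i ≤ 1 ∧ u (i + 1) ≤ (1 - γ i) * u i + d i :=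
    fun i hi => hm₀ i (hm.trans hi)
  have hprod := (tendsto_prod_Ico_one_sub_of_tendsto_sum (m := m)
    (fun i hi => (hstep_m i hi).2.1) hγ).mul_const (u m)
  rw [zero_mul] at hprod
  filter_upwards [hprod.eventually (gt_mem_nhds (half_pos hε)), eventually_ge_atTop m]
    with n hn hmn
  have htail : ∑ i ∈ Ico m n, d i ≤ ∑' i, d i - ∑ i ∈ range m, d i := by
    rw [sum_Ico_eq_sub _ hmn]
    gcongr
    exact hds.sum_le_tsum _ fun i _ => hd i
  calc u n ≤ (∏ i ∈ Ico m n, (1 - γ i)) * u m + ∑ i ∈ Ico m n, d i :=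
        le_prod_mul_add_sum_of_le_mul_add (fun i hi => sub_nonneg.2 (hstep_m i hi).2.1)
          (fun i hi => sub_le_self _ (hstep_m i hi).1) (fun i _ => hd i)
          (fun i hi => (hstep_m i hi).2.2) hmn
    _ < ε / 2 + ε / 2 := add_lt_add_of_lt_of_le hn (htail.trans hm_tail.le)
    _ = ε := add_halves ε

theorem summable_inv_sq_mul_sq_add_one {σ : ℝ} (hσ : σ ≠ 0) :
    Summable fun i : ℕ => ((i : ℝ) ^ 2 * σ ^ 2 + 1)⁻¹ := by
  refine .of_norm_bounded_eventually_nat ((Real.summable_nat_pow_inv.2 one_lt_two).mul_left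
    (σ ^ 2)⁻¹) ?_
  filter_upwards [eventually_ge_atTop 1] with i hi
  have hpos : (0 : ℝ) < σ ^ 2 * (i : ℝ) ^ 2 := by positivity
  rw [Real.norm_of_nonneg (by positivity), ← mul_inv, mul_comm ((i : ℝ) ^ 2)]
  exact inv_anti₀ hpos (le_add_of_nonneg_right zero_le_one)

theorem abs_mul_one_sub_div_add_one_le {x t : ℝ} (hx : 1 ≤ x) (ht0 : 0 ≤ t) (ht1 : t ≤ 1) :
    |x * (1 - t) / (x + 1)| ≤ 1 - t / 2 := by
  rw [abs_of_nonneg (by have := sub_nonneg.2 ht1; positivity), div_le_iff₀ (by linarith)]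
  nlinarith

theorem stmt_7 (σ a b : ℝ) (s e : ℕ → ℝ) (h : ℕ)
    (hσ : 0 < σ) (ha : 0 < a)
    (hs : ∀ i, 0 ≤ s i)
    (hlt : ∀ i ≥ h, a * s i < 1)
    (hdiv : Tendsto (fun n => ∑ i ∈ Finset.range n, s i) atTop atTop)
    (hrec : ∀ i ≥ 1, e (i + 1) =
      ((i : ℝ) ^ 2 * σ ^ 2 * (1 - a * s i)) / ((i : ℝ) ^ 2 * σ ^ 2 + 1) * e i +
        b / ((i : ℝ) ^ 2 * σ ^ 2 + 1)) :
    Tendsto e atTop (nhds 0) := by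
  rw [tendsto_zero_iff_abs_tendsto_zero]
  have hsum : Summable fun i : ℕ => |b / ((i : ℝ) ^ 2 * σ ^ 2 + 1)| := by
    simpa only [div_eq_mul_inv] using ((summable_inv_sq_mul_sq_add_one hσ.ne').mul_left b).abs
  have hγ : Tendsto (fun n => ∑ i ∈ range n, a * s i / 2) atTop atTop := by
    simpa only [← sum_div, ← mul_sum] using (hdiv.const_mul_atTop ha).atTop_div_const two_pos
  have hx : ∀ᶠ i : ℕ in atTop, 1 ≤ (i : ℝ) ^ 2 * σ ^ 2 :=
    (((tendsto_pow_atTop two_ne_zero).comp tendsto_natCast_atTop_atTop).atTop_mul_const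
      (by positivity)).eventually_ge_atTop 1
  refine tendsto_zero_of_le_one_sub_mul_add (fun n => abs_nonneg _) (fun n => abs_nonneg _)
    hsum hγ ?_
  filter_upwards [hx, eventually_ge_atTop (max h 1)] with i hx hi
  have hta : 0 ≤ a * s i := mul_nonneg ha.le (hs i)
  have hta1 : a * s i < 1 := hlt i (le_of_max_le_left hi)
  refine ⟨by positivity, by linarith, ?_⟩
  show |e (i + 1)| ≤ (1 - a * s i / 2) * |e i| + _
  rw [hrec i (le_of_max_le_right hi)]
  refine (abs_add_le _ _).trans ?_
  rw [abs_mul]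
  gcongr
  exact abs_mul_one_sub_div_add_one_le hx hta hta1.le
end

section
/- Suppose π : ℝ → ℝ is a positive differentiable probability density with |π'(x)/π(x)| ≤ J for all x, and N_i(x) is the Gaussian density with mean μ and variance 1/i². If x* is a critical point maximizing π(x)·N_i(x), then |x* - μ| ≤ J/i². -/
/-!
At a critical point of `π · N_i` the Gaussian factor, whose logarithmic derivative is
`-i² (x - μ)`, forces `π' = i² (x - μ) π`; the bound `|π'| ≤ J π` then gives `i² |x - μ| ≤ J`.
-/

theorem hasDerivAt_gaussian (c a μ x : ℝ) :
    HasDerivAt (fun y => c * Real.exp (-a * (y - μ) ^ 2 / 2))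
      (-a * (x - μ) * (c * Real.exp (-a * (x - μ) ^ 2 / 2))) x := by
  have hq : HasDerivAt (fun y => -a * (y - μ) ^ 2 / 2) (-a * (x - μ)) x := by
    have := (((hasDerivAt_id x).sub_const μ).fun_pow 2).const_mul (-a) |>.div_const 2
    exact this.congr_deriv (by simp; ring)
  exact (hq.exp.const_mul c).congr_deriv (by ring)

theorem deriv_eq_of_deriv_mul_eq_zero {f g : ℝ → ℝ} {x k : ℝ} (hf : DifferentiableAt ℝ f x)
    (hg : HasDerivAt g (k * g x) x) (hgx : g x ≠ 0)
    (h : deriv (fun y => f y * g y) x = 0) : deriv f x = -k * f x := by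
  rw [(hf.hasDerivAt.fun_mul hg).deriv] at h
  have : (deriv f x + k * f x) * g x = 0 := by linear_combination h
  linarith [(mul_eq_zero.mp this).resolve_right hgx]

theorem abs_sub_le_of_deriv_eq {f : ℝ → ℝ} {x μ a J : ℝ} (ha : 0 < a) (hfx : 0 < f x)
    (hbound : |deriv f x| ≤ J * f x) (hderiv : deriv f x = a * (x - μ) * f x) :
    |x - μ| ≤ J / a := by
  rw [hderiv, abs_mul, abs_mul, abs_of_pos ha, abs_of_pos hfx] at hbound
  rw [le_div_iff₀ ha, mul_comm]
  exact le_of_mul_le_mul_right hbound hfx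

theorem stmt_9_general (J μ xstar : ℝ) (i : ℕ) (π : ℝ → ℝ)
    (hi : 1 ≤ i)
    (hπpos : ∀ x, 0 < π x)
    (hπdiff : Differentiable ℝ π)
    (hlog : ∀ x, |deriv π x| ≤ J * π x)
    (hcrit : deriv (fun x => π x *
      ((i : ℝ) / Real.sqrt (2 * Real.pi) *
        Real.exp (-(i : ℝ) ^ 2 * (x - μ) ^ 2 / 2))) xstar = 0) :
    |xstar - μ| ≤ J / (i : ℝ) ^ 2 := by
  have hi2 : 0 < (i : ℝ) ^ 2 := by positivity
  have hN : (i : ℝ) / Real.sqrt (2 * Real.pi) * Real.exp (-(i : ℝ) ^ 2 * (xstar - μ) ^ 2 / 2)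
      ≠ 0 := by
    positivity
  have hπ' := deriv_eq_of_deriv_mul_eq_zero (hπdiff xstar)
    (hasDerivAt_gaussian _ _ μ xstar) hN hcrit
  exact abs_sub_le_of_deriv_eq hi2 (hπpos xstar) (hlog xstar) (by rw [hπ']; ring)

theorem stmt_9 (J μ xstar : ℝ) (i : ℕ) (π : ℝ → ℝ)
    (hJ : 0 < J) (hi : 1 ≤ i)
    (hπpos : ∀ x, 0 < π x)
    (hπdiff : Differentiable ℝ π)
    (hlog : ∀ x, |deriv π x| ≤ J * π x)
    (hcrit : deriv (fun x => π x *
      ((i : ℝ) / Real.sqrt (2 * Real.pi) *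
        Real.exp (-(i : ℝ) ^ 2 * (x - μ) ^ 2 / 2))) xstar = 0) :
    |xstar - μ| ≤ J / (i : ℝ) ^ 2 :=
  stmt_9_general J μ xstar i π hi hπpos hπdiff hlog hcrit
end

section
/- Let the weighted-sum-of-Gaussians prior be P(x) = ∑_{r=1}^L w_r N(x | μ_r, σ²) with w_r > 0, ∑ w_r = 1, σ > 0, and let G(x) = N(x | m, 1/i²). Then any maximizer x* of P·G lies between min_r z_r and max_r z_r, where z_r = (i²σ² m + μ_r)/(i²σ² + 1) is the maximizer of N(·|μ_r,σ²)·G. -/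
/-!
Completing the square, `N(x | μ, σ²) · N(x | m, 1/τ²)` is a constant times
`exp (-(σ⁻² + τ²)/2 · (x - z)²)` with `z = (τ²σ² m + μ)/(τ²σ² + 1)`, so it strictly increases as `x`
moves towards `z`. Left of all the `z_r`, moving `x` up to `min z_r` brings it closer to every `z_r`,
hence strictly increases every summand of the mixture; symmetrically right of all the `z_r`.
-/

/-- Gaussian density with mean `α` and standard deviation `β`. -/
noncomputable def gaussianDensity (α β x : ℝ) : ℝ :=
  (1 / (β * Real.sqrt (2 * Real.pi))) * Real.exp (-(x - α) ^ 2 / (2 * β ^ 2))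

section WeightedSum

variable {ι : Type*} {s : Finset ι} (hs : s.Nonempty) {w : ι → ℝ} (hw : ∀ r ∈ s, 0 < w r)
  {f : ι → ℝ → ℝ} {z : ι → ℝ} (hf : ∀ r ∈ s, ∀ x y, |x - z r| < |y - z r| → f r y < f r x)
include hs hw hf

lemma Finset.sum_mul_lt_sum_mul_of_closer {a x : ℝ} (hcloser : ∀ r ∈ s, |a - z r| < |x - z r|) :
    ∑ r ∈ s, w r * f r x < ∑ r ∈ s, w r * f r a :=
  Finset.sum_lt_sum_of_nonempty hs fun r hr =>
    mul_lt_mul_of_pos_left (hf r hr _ _ (hcloser r hr)) (hw r hr)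

lemma Finset.inf'_le_and_le_sup'_of_forall_sum_mul_le {xstar : ℝ}
    (hmax : ∀ x, ∑ r ∈ s, w r * f r x ≤ ∑ r ∈ s, w r * f r xstar) :
    s.inf' hs z ≤ xstar ∧ xstar ≤ s.sup' hs z := by
  constructor
  · by_contra! hlt
    refine (hmax (s.inf' hs z)).not_gt (Finset.sum_mul_lt_sum_mul_of_closer hs hw hf fun r hr => ?_)
    have hle : s.inf' hs z ≤ z r := Finset.inf'_le z hr
    rw [abs_of_nonpos (by linarith), abs_of_neg (by linarith)]
    linarith
  · by_contra! hlt
    refine (hmax (s.sup' hs z)).not_gt (Finset.sum_mul_lt_sum_mul_of_closer hs hw hf fun r hr => ?_)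
    have hle : z r ≤ s.sup' hs z := Finset.le_sup' z hr
    rw [abs_of_nonneg (by linarith), abs_of_pos (by linarith)]
    linarith

end WeightedSum

section GaussianProduct

variable {σ τ : ℝ} (hσ : 0 < σ) (hτ : 0 < τ) (μ m : ℝ)
include hσ hτ

lemma gaussianDensity_mul_gaussianDensity_eq (x : ℝ) :
    gaussianDensity μ σ x * gaussianDensity m (1 / τ) x =
      (1 / (σ * Real.sqrt (2 * Real.pi)) * (1 / (1 / τ * Real.sqrt (2 * Real.pi)))) *
        Real.exp (-((1 / σ ^ 2 + τ ^ 2) / 2) *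
            (x - (τ ^ 2 * σ ^ 2 * m + μ) / (τ ^ 2 * σ ^ 2 + 1)) ^ 2 -
          (μ - m) ^ 2 * τ ^ 2 / (2 * (τ ^ 2 * σ ^ 2 + 1))) := by
  have hden : τ ^ 2 * σ ^ 2 + 1 ≠ 0 := by positivity
  unfold gaussianDensity
  rw [mul_mul_mul_comm, ← Real.exp_add]
  congr 2
  field_simp
  ring

lemma gaussianDensity_mul_gaussianDensity_lt_of_abs_sub_lt {x y : ℝ}
    (hcloser : |x - (τ ^ 2 * σ ^ 2 * m + μ) / (τ ^ 2 * σ ^ 2 + 1)| <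
      |y - (τ ^ 2 * σ ^ 2 * m + μ) / (τ ^ 2 * σ ^ 2 + 1)|) :
    gaussianDensity μ σ y * gaussianDensity m (1 / τ) y <
      gaussianDensity μ σ x * gaussianDensity m (1 / τ) x := by
  rw [gaussianDensity_mul_gaussianDensity_eq hσ hτ, gaussianDensity_mul_gaussianDensity_eq hσ hτ]
  refine mul_lt_mul_of_pos_left (Real.exp_lt_exp.mpr (sub_lt_sub_right ?_ _)) (by positivity)
  rw [neg_mul, neg_mul, neg_lt_neg_iff]
  exact mul_lt_mul_of_pos_left (sq_lt_sq.mpr hcloser) (by positivity)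

end GaussianProduct

theorem stmt_12_general (L : ℕ) (w μ : Fin (L + 1) → ℝ) (σ m : ℝ) (i : ℕ) (xstar : ℝ)
    (hσ : 0 < σ) (hi : 1 ≤ i)
    (hw : ∀ r, 0 < w r)
    (hmax : ∀ x : ℝ,
      (∑ r, w r * gaussianDensity (μ r) σ x) * gaussianDensity m (1 / (i : ℝ)) x ≤
      (∑ r, w r * gaussianDensity (μ r) σ xstar) * gaussianDensity m (1 / (i : ℝ)) xstar) :
    (Finset.univ.inf' Finset.univ_nonempty
        (fun r => ((i : ℝ) ^ 2 * σ ^ 2 * m + μ r) / ((i : ℝ) ^ 2 * σ ^ 2 + 1))) ≤ xstar ∧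
    xstar ≤ (Finset.univ.sup' Finset.univ_nonempty
        (fun r => ((i : ℝ) ^ 2 * σ ^ 2 * m + μ r) / ((i : ℝ) ^ 2 * σ ^ 2 + 1))) := by
  have hi : (0 : ℝ) < i := by exact_mod_cast hi
  simp only [Finset.sum_mul, mul_assoc] at hmax
  exact Finset.inf'_le_and_le_sup'_of_forall_sum_mul_le Finset.univ_nonempty (fun r _ => hw r)
    (fun r _ _ _ => gaussianDensity_mul_gaussianDensity_lt_of_abs_sub_lt hσ hi (μ r) m) hmax

theorem stmt_12 (L : ℕ) (w μ : Fin (L + 1) → ℝ) (σ m : ℝ) (i : ℕ) (xstar : ℝ)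
    (hσ : 0 < σ) (hi : 1 ≤ i)
    (hw : ∀ r, 0 < w r) (hsum : ∑ r, w r = 1)
    (hmax : ∀ x : ℝ,
      (∑ r, w r * gaussianDensity (μ r) σ x) * gaussianDensity m (1 / (i : ℝ)) x ≤
      (∑ r, w r * gaussianDensity (μ r) σ xstar) * gaussianDensity m (1 / (i : ℝ)) xstar) :
    (Finset.univ.inf' Finset.univ_nonempty
        (fun r => ((i : ℝ) ^ 2 * σ ^ 2 * m + μ r) / ((i : ℝ) ^ 2 * σ ^ 2 + 1))) ≤ xstar ∧
    xstar ≤ (Finset.univ.sup' Finset.univ_nonempty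
        (fun r => ((i : ℝ) ^ 2 * σ ^ 2 * m + μ r) / ((i : ℝ) ^ 2 * σ ^ 2 + 1))) :=
  stmt_12_general L w μ σ m i xstar hσ hi hw hmax
end

section
/- Suppose e_{n+1} = c_n e_n + r_n where 0 ≤ c_n ≤ 1, ∏_{k=h}^∞ c_k = 0, and ∑_{n=h}^∞ |r_n| < ∞, and additionally for every m, ∏_{k=m}^∞ c_k = 0. Then e_n → 0. -/
/-!
Unrolling `|e (n+1)| ≤ c n * |e n| + |r n|` from an index `m` gives
`|e (n+1)| ≤ (∏ k ∈ [m, n], c k) * |e m| + ∑ k ∈ [m, n], |r k|`.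
Choosing `m` so large that every block sum of `|r|` beyond `m` is below `ε / 2`, and then `n` so
large that the product term is below `ε / 2`, gives `|e (n+1)| < ε`.
-/

open Filter Finset

theorem le_prod_Icc_mul_add_sum_Icc_of_le_mul_add {a c s : ℕ → ℝ} {m : ℕ}
    (hc : ∀ n ≥ m, 0 ≤ c n ∧ c n ≤ 1) (hs : ∀ n, 0 ≤ s n)
    (hrec : ∀ n ≥ m, a (n + 1) ≤ c n * a n + s n) :
    ∀ n ≥ m, a (n + 1) ≤ (∏ k ∈ Icc m n, c k) * a m + ∑ k ∈ Icc m n, s k := by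
  intro n hn
  induction n, hn using Nat.le_induction with
  | base => simpa using hrec m le_rfl
  | succ n hmn ih =>
    obtain ⟨hc₀, hc₁⟩ := hc (n + 1) (by omega)
    have hS : c (n + 1) * ∑ k ∈ Icc m n, s k ≤ ∑ k ∈ Icc m n, s k :=
      mul_le_of_le_one_left (sum_nonneg fun k _ => hs k) hc₁
    rw [prod_Icc_succ_top (by omega), sum_Icc_succ_top (by omega)]
    calc a (n + 1 + 1) ≤ c (n + 1) * a (n + 1) + s (n + 1) := hrec (n + 1) (by omega)
      _ ≤ c (n + 1) * ((∏ k ∈ Icc m n, c k) * a m + ∑ k ∈ Icc m n, s k) + s (n + 1) := by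
          gcongr
      _ ≤ (∏ k ∈ Icc m n, c k) * c (n + 1) * a m + (∑ k ∈ Icc m n, s k + s (n + 1)) := by
          linarith

theorem Summable.exists_forall_abs_sum_Icc_lt {f : ℕ → ℝ} (hf : Summable f) {ε : ℝ}
    (hε : 0 < ε) : ∃ N, ∀ m ≥ N, ∀ n, |∑ k ∈ Icc m n, f k| < ε := by
  obtain ⟨s, hs⟩ := summable_iff_vanishing_norm.1 hf ε hε
  obtain ⟨N, hsN⟩ := s.exists_nat_subset_range
  refine ⟨N, fun m hm n => hs _ (disjoint_of_subset_right hsN ?_)⟩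
  exact disjoint_left.2 fun k hk hk' => by
    simp only [mem_Icc, mem_range] at hk hk'; omega

theorem stmt_17 (e c r : ℕ → ℝ) (h : ℕ)
    (hc : ∀ n ≥ h, 0 ≤ c n ∧ c n ≤ 1)
    (hprod : ∀ m ≥ h, Tendsto (fun n => ∏ k ∈ Finset.Icc m n, c k) atTop (nhds 0))
    (hr : Summable (fun n => |r n|))
    (hrec : ∀ n ≥ h, e (n + 1) = c n * e n + r n) :
    Tendsto e atTop (nhds 0) := by
  rw [← tendsto_add_atTop_iff_nat 1]
  refine Metric.tendsto_nhds.2 fun ε hε => ?_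
  obtain ⟨N, hN⟩ := hr.exists_forall_abs_sum_Icc_lt (half_pos hε)
  set m := max h N
  have hstep : ∀ n ≥ h, |e (n + 1)| ≤ c n * |e n| + |r n| := fun n hn =>
    calc |e (n + 1)| ≤ |c n * e n| + |r n| := hrec n hn ▸ abs_add_le _ _
      _ = c n * |e n| + |r n| := by rw [abs_mul, abs_of_nonneg (hc n hn).1]
  have hbound := le_prod_Icc_mul_add_sum_Icc_of_le_mul_add (a := fun n => |e n|) (m := m)
    (fun n hn => hc n (le_of_max_le_left hn)) (fun n => abs_nonneg (r n))
    (fun n hn => hstep n (le_of_max_le_left hn))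
  have hprod_small : ∀ᶠ n in atTop, (∏ k ∈ Icc m n, c k) * |e m| < ε / 2 := by
    have := (hprod m (le_max_left h N)).mul_const |e m|
    rw [zero_mul] at this
    exact this.eventually (gt_mem_nhds (half_pos hε))
  filter_upwards [hprod_small, eventually_ge_atTop m] with n hn hmn
  rw [Real.dist_eq, sub_zero]
  calc |e (n + 1)| ≤ (∏ k ∈ Icc m n, c k) * |e m| + ∑ k ∈ Icc m n, |r k| := hbound n hmn
    _ < ε / 2 + ε / 2 := add_lt_add hn ((le_abs_self _).trans_lt (hN m (le_max_right h N) n))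
    _ = ε := add_halves ε
end

section
/- For the prior-information RM iterate with log-Lipschitz prior (|π'/π| ≤ J) and step sizes s_i = 1/i, if x_{i+1} is a critical point of π(x)·N(x | x_i - s_i(f(x_i) - y_t + ε_i), 1/i²), then there exists g_i ∈ [f(x_i) - J/i, f(x_i) + J/i] such that x_{i+1} = x_i - s_i(g_i - y_t + ε_i); i.e., the prior-information step coincides with a standard RM step applied to a function perturbed by at most J/i. -/
lemma gaussianDensity_pos {β : ℝ} (hβ : 0 < β) (α x : ℝ) : 0 < gaussianDensity α β x := by
  unfold gaussianDensity
  have : 0 < √(2 * Real.pi) := by positivity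
  positivity

lemma hasDerivAt_gaussianDensity (α β x : ℝ) :
    HasDerivAt (gaussianDensity α β) (-(x - α) / β ^ 2 * gaussianDensity α β x) x := by
  have hquad : HasDerivAt (fun y : ℝ => -(y - α) ^ 2 / (2 * β ^ 2)) (-(x - α) / β ^ 2) x :=
    ((((hasDerivAt_id' x).sub_const α).fun_pow 2).fun_neg.div_const _).congr_deriv (by ring)
  exact (hquad.exp.const_mul _).congr_deriv (by unfold gaussianDensity; ring)

lemma deriv_eq_of_deriv_mul_gaussianDensity_eq_zero {p : ℝ → ℝ} {α β x : ℝ} (hβ : 0 < β)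
    (hp : DifferentiableAt ℝ p x)
    (hcrit : deriv (fun y => p y * gaussianDensity α β y) x = 0) :
    deriv p x = p x * (x - α) / β ^ 2 := by
  rw [(hp.hasDerivAt.fun_mul (hasDerivAt_gaussianDensity α β x)).deriv] at hcrit
  have hG := (gaussianDensity_pos hβ α x).ne'
  rw [eq_div_iff (pow_pos hβ 2).ne']
  apply mul_right_cancel₀ hG
  field_simp at hcrit
  linear_combination hcrit

lemma abs_sub_le_of_deriv_mul_gaussianDensity_eq_zero {p : ℝ → ℝ} {α β x J : ℝ} (hβ : 0 < β)
    (hp : DifferentiableAt ℝ p x) (hpos : 0 < p x) (hlog : |deriv p x| ≤ J * p x)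
    (hcrit : deriv (fun y => p y * gaussianDensity α β y) x = 0) :
    |x - α| ≤ J * β ^ 2 := by
  rw [deriv_eq_of_deriv_mul_gaussianDensity_eq_zero hβ hp hcrit, abs_div, abs_mul,
    abs_of_pos hpos, abs_of_pos (pow_pos hβ 2), div_le_iff₀ (pow_pos hβ 2)] at hlog
  nlinarith

lemma exists_eq_step_of_abs_sub_step_le {s x x' c y e δ : ℝ} (hs : 0 < s)
    (h : |x' - (x - s * (c - y + e))| ≤ δ * s ^ 2) :
    ∃ g, |g - c| ≤ δ * s ∧ x' = x - s * (g - y + e) := by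
  refine ⟨(x - x') / s + y - e, ?_, by field_simp; ring⟩
  have hdiff : (x - x') / s + y - e - c = -(x' - (x - s * (c - y + e))) / s := by
    field_simp; ring
  rw [hdiff, abs_div, abs_neg, abs_of_pos hs, div_le_iff₀ hs]
  linarith

theorem stmt_19_general (J yt εi xi xnext : ℝ) (i : ℕ) (π f : ℝ → ℝ)
    (hi : 1 ≤ i)
    (hπpos : ∀ x, 0 < π x)
    (hπdiff : Differentiable ℝ π)
    (hlog : ∀ x, |deriv π x| ≤ J * π x)
    (hcrit : deriv (fun x => π x *
      gaussianDensity (xi - (1 / (i : ℝ)) * (f xi - yt + εi)) (1 / (i : ℝ)) x) xnext = 0) :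
    ∃ g : ℝ, |g - f xi| ≤ J / (i : ℝ) ∧
      xnext = xi - (1 / (i : ℝ)) * (g - yt + εi) := by
  have hs : (0 : ℝ) < 1 / (i : ℝ) := by
    have : (0 : ℝ) < i := by exact_mod_cast hi
    positivity
  have hclose := abs_sub_le_of_deriv_mul_gaussianDensity_eq_zero hs (hπdiff xnext)
    (hπpos xnext) (hlog xnext) hcrit
  simpa only [mul_one_div] using exists_eq_step_of_abs_sub_step_le hs hclose

theorem stmt_19 (J yt εi xi xnext : ℝ) (i : ℕ) (π f : ℝ → ℝ)
    (hJ : 0 < J) (hi : 1 ≤ i)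
    (hπpos : ∀ x, 0 < π x)
    (hπdiff : Differentiable ℝ π)
    (hlog : ∀ x, |deriv π x| ≤ J * π x)
    (hcrit : deriv (fun x => π x *
      gaussianDensity (xi - (1 / (i : ℝ)) * (f xi - yt + εi)) (1 / (i : ℝ)) x) xnext = 0) :
    ∃ g : ℝ, |g - f xi| ≤ J / (i : ℝ) ∧
      xnext = xi - (1 / (i : ℝ)) * (g - yt + εi) :=
  stmt_19_general J yt εi xi xnext i π f hi hπpos hπdiff hlog hcrit
end
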